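/- arXiv:2604.02619 — 3 statements merged into one kernel-verified Lean document; each statement's English description precedes it below -/
import Mathlib

section
/- Let A ∈ ℝ^{n×n}, B₁ ∈ ℝ^{n×m₁}, B₂ ∈ ℝ^{n×m₂}, let Q ∈ ℝ^{n×n}, let R_u ∈ ℝ^{m₁×m₁} and R_v ∈ ℝ^{m₂×m₂} be symmetric, and let P⋆ ∈ ℝ^{n×n} be symmetric. Let K⋆, L⋆ be gains with A⋆ := A − B₁K⋆ − B₂L⋆ satisfying the stationarity identities B₁ᵀP⋆A⋆ = R_uK⋆ and B₂ᵀP⋆A⋆ = −R_vL⋆, and suppose P⋆ = Q + K⋆ᵀR_uK⋆ − L⋆ᵀR_vL⋆ + A⋆ᵀP⋆A⋆. Let K, L be any gains, set A_cl = A − B₁K − B₂L, and suppose P ∈ ℝ^{n×n} satisfies the closed-loop Lyapunov equation P = Q + KᵀR_uK − LᵀR_vL + A_clᵀPA_cl. Then, with ΔP := P − P⋆, ΔK := K − K⋆, ΔL := L − L⋆, and δB := B₁ΔK + B₂ΔL, the exact identity ΔP = A⋆ᵀΔPA⋆ + ΔKᵀR_uΔK − ΔLᵀR_vΔL + δBᵀP⋆δB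 − A⋆ᵀΔP·δB − δBᵀΔP·A⋆ + δBᵀΔP·δB holds; in particular, all terms linear in (ΔK, ΔL) cancel. -/
open Matrix

/-- **Exact difference equation for `ΔP = P_{K,L} − P⋆` (Lemma 3).** Let `P⋆` be symmetric and
satisfy the closed-loop Lyapunov form of the GARE with the stationarity identities at the
Nash gains `(K⋆, L⋆)`, and let `P` satisfy the closed-loop Lyapunov equation for arbitrary
gains `(K, L)`.  Then, with `ΔP = P − P⋆`, `ΔK = K − K⋆`, `ΔL = L − L⋆`,
`δB = B₁ΔK + B₂ΔL`, and `A⋆ = A − B₁K⋆ − B₂L⋆`, the exact identity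
`ΔP = A⋆ᵀΔPA⋆ + ΔKᵀR_uΔK − ΔLᵀR_vΔL + δBᵀP⋆δB − A⋆ᵀΔPδB − δBᵀΔPA⋆ + δBᵀΔPδB`
holds: all terms linear in `(ΔK, ΔL)` cancel. -/
theorem deltaP_exact_difference_identity
    {n m₁ m₂ : ℕ}
    (A : Matrix (Fin n) (Fin n) ℝ)
    (B₁ : Matrix (Fin n) (Fin m₁) ℝ) (B₂ : Matrix (Fin n) (Fin m₂) ℝ)
    (Q : Matrix (Fin n) (Fin n) ℝ)
    (Ru : Matrix (Fin m₁) (Fin m₁) ℝ) (hRu : Ru.IsSymm)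
    (Rv : Matrix (Fin m₂) (Fin m₂) ℝ) (hRv : Rv.IsSymm)
    (Pstar : Matrix (Fin n) (Fin n) ℝ) (hPstar : Pstar.IsSymm)
    (Kstar : Matrix (Fin m₁) (Fin n) ℝ) (Lstar : Matrix (Fin m₂) (Fin n) ℝ)
    (Astar : Matrix (Fin n) (Fin n) ℝ)
    (hAstar : Astar = A - B₁ * Kstar - B₂ * Lstar)
    (hstat1 : B₁ᵀ * Pstar * Astar = Ru * Kstar)
    (hstat2 : B₂ᵀ * Pstar * Astar = -(Rv * Lstar))
    (hRiccati : Pstar = Q + Kstarᵀ * Ru * Kstar - Lstarᵀ * Rv * Lstar + Astarᵀ * Pstar * Astar)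
    (K : Matrix (Fin m₁) (Fin n) ℝ) (L : Matrix (Fin m₂) (Fin n) ℝ)
    (Acl : Matrix (Fin n) (Fin n) ℝ) (hAcl : Acl = A - B₁ * K - B₂ * L)
    (P : Matrix (Fin n) (Fin n) ℝ)
    (hLyap : P = Q + Kᵀ * Ru * K - Lᵀ * Rv * L + Aclᵀ * P * Acl)
    (ΔP : Matrix (Fin n) (Fin n) ℝ) (hΔP : ΔP = P - Pstar)
    (ΔK : Matrix (Fin m₁) (Fin n) ℝ) (hΔK : ΔK = K - Kstar)
    (ΔL : Matrix (Fin m₂) (Fin n) ℝ) (hΔL : ΔL = L - Lstar)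
    (δB : Matrix (Fin n) (Fin n) ℝ) (hδB : δB = B₁ * ΔK + B₂ * ΔL) :
    ΔP = Astarᵀ * ΔP * Astar + ΔKᵀ * Ru * ΔK - ΔLᵀ * Rv * ΔL + δBᵀ * Pstar * δB
      - Astarᵀ * ΔP * δB - δBᵀ * ΔP * Astar + δBᵀ * ΔP * δB := by
  have hA : A = Astar + B₁ * Kstar + B₂ * Lstar := by rw [hAstar]; abel
  subst hΔK
  subst hΔL
  subst hδB
  subst hΔP
  subst hAcl
  subst hA
  have hstat1t : Astarᵀ * Pstar * B₁ = Kstarᵀ * Ru := by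
    have h := congrArg Matrix.transpose hstat1
    simpa [Matrix.transpose_mul, Matrix.mul_assoc, hPstar.eq, hRu.eq] using h
  have hstat2t : Astarᵀ * Pstar * B₂ = -(Lstarᵀ * Rv) := by
    have h := congrArg Matrix.transpose hstat2
    simpa [Matrix.transpose_mul, Matrix.mul_assoc, hPstar.eq, hRv.eq] using h
  conv_lhs => rw [hLyap, hRiccati]
  rw [← sub_eq_zero]
  have hz : ((K - Kstar)ᵀ * (Ru * Kstar) + (L - Lstar)ᵀ * (-(Rv * Lstar))
        + Kstarᵀ * Ru * (K - Kstar) + (-(Lstarᵀ * Rv)) * (L - Lstar))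
      - ((K - Kstar)ᵀ * (B₁ᵀ * Pstar * Astar) + (L - Lstar)ᵀ * (B₂ᵀ * Pstar * Astar)
        + Astarᵀ * Pstar * B₁ * (K - Kstar) + Astarᵀ * Pstar * B₂ * (L - Lstar)) = 0 := by
    rw [hstat1, hstat2, hstat1t, hstat2t, sub_self]
  rw [← hz]
  simp only [Matrix.transpose_add, Matrix.transpose_sub, Matrix.transpose_mul,
    Matrix.transpose_neg, Matrix.mul_add, Matrix.add_mul, Matrix.mul_sub, Matrix.sub_mul,
    Matrix.neg_mul, Matrix.mul_neg, Matrix.mul_assoc, Matrix.transpose_transpose]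
  abel
end

section
/- Let κ ≥ 1 and γ ∈ (0, 1). Let S ∈ ℝ^{n×n} be symmetric with I_n ≼ S ≼ κI_n, and let A ∈ ℝ^{n×n} satisfy AᵀSA ≼ (1−γ)²S in the Loewner order. Then for every X ∈ ℝ^{n×n}, any solution P of the discrete Lyapunov equation P − AᵀPA = X satisfies ‖P‖_F ≤ (κ / (γ(2−γ))) · ‖X‖_F. -/
open Matrix

/-- The Frobenius norm of a real matrix. -/
noncomputable def frobNorm {m n : ℕ} (M : Matrix (Fin m) (Fin n) ℝ) : ℝ :=
  Real.sqrt (∑ i, ∑ j, (M i j) ^ 2)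

/-!
Write `𝓛 M = Aᵀ M A`, so that `P = X + 𝓛 P = ∑_{t<T} 𝓛ᵗ X + 𝓛^T P` for every `T`. Conjugating
`AᵀSA ≼ (1-γ)²S` by powers of `A` and using `I ≼ S ≼ κI` gives
`(Aᵗ)ᵀAᵗ ≼ (Aᵗ)ᵀSAᵗ ≼ (1-γ)^{2t} S ≼ κ(1-γ)^{2t} I`, so the spectral norm of `Aᵗ` is at most
`√κ (1-γ)ᵗ` and `‖𝓛ᵗ M‖_F ≤ κ (1-γ)^{2t} ‖M‖_F`. Summing the geometric series and letting
`T → ∞` bounds `‖P‖_F` by `κ / (1 - (1-γ)²) ‖X‖_F`.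
-/

open Filter Topology
open scoped MatrixOrder

-- `‖M‖` is the Frobenius norm of a matrix; spectral norms appear as `‖toEuclideanCLM B‖`.
attribute [local instance] Matrix.frobeniusNormedAddCommGroup

namespace Module.End

variable {R E : Type*} [Semiring R]

theorem sum_pow_apply_add_pow_apply [AddCommGroup E] [Module R E] (L : Module.End R E) {x y : E}
    (h : x - L x = y) (T : ℕ) : ∑ t ∈ Finset.range T, (L ^ t) y + (L ^ T) x = x := by
  have hgeom := congrArg (· x) (geom_sum_mul_neg L T)
  simp only [Module.End.mul_apply, LinearMap.sub_apply, Module.End.one_apply, h,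
    LinearMap.sum_apply] at hgeom
  rw [hgeom, sub_add_cancel]

theorem norm_le_of_sub_apply_eq [SeminormedAddCommGroup E] [Module R E] (L : Module.End R E)
    {C q : ℝ} (hC : 0 ≤ C) (hq₀ : 0 ≤ q) (hq₁ : q < 1) (hL : ∀ t x, ‖(L ^ t) x‖ ≤ C * q ^ t * ‖x‖)
    {x y : E} (h : x - L x = y) : ‖x‖ ≤ C / (1 - q) * ‖y‖ := by
  have hT : ∀ T : ℕ, ‖x‖ ≤ C / (1 - q) * ‖y‖ + C * q ^ T * ‖x‖ := fun T ↦
    calc ‖x‖ = ‖∑ t ∈ Finset.range T, (L ^ t) y + (L ^ T) x‖ := by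
          rw [sum_pow_apply_add_pow_apply L h]
      _ ≤ ∑ t ∈ Finset.range T, C * q ^ t * ‖y‖ + C * q ^ T * ‖x‖ :=
          (norm_add_le _ _).trans <| add_le_add
            ((norm_sum_le _ _).trans (Finset.sum_le_sum fun t _ ↦ hL t y)) (hL T x)
      _ = C * (∑ t ∈ Finset.range T, q ^ t) * ‖y‖ + C * q ^ T * ‖x‖ := by
          rw [Finset.mul_sum, Finset.sum_mul]
      _ ≤ C * (1 / (1 - q)) * ‖y‖ + C * q ^ T * ‖x‖ := by
          have hgeom := geom_sum_Ico_le_of_lt_one hq₀ hq₁ (m := 0) (n := T)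
          rw [← Finset.range_eq_Ico, pow_zero] at hgeom
          gcongr
      _ = C / (1 - q) * ‖y‖ + C * q ^ T * ‖x‖ := by rw [mul_one_div]
  have hlim : Tendsto (fun T : ℕ ↦ C / (1 - q) * ‖y‖ + C * q ^ T * ‖x‖) atTop
      (𝓝 (C / (1 - q) * ‖y‖)) := by
    simpa using ((tendsto_pow_atTop_nhds_zero_of_lt_one hq₀ hq₁).const_mul C).mul_const ‖x‖
      |>.const_add (C / (1 - q) * ‖y‖)
  exact ge_of_tendsto' hlim hT

end Module.End

section StarConj

variable (R : Type*) {A : Type*} [CommSemiring R] [Semiring A] [StarMul A] [Algebra R A]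

def starConj (a : A) : Module.End R A :=
  LinearMap.mulRight R a ∘ₗ LinearMap.mulLeft R (star a)

variable {R}

theorem starConj_apply (a x : A) : starConj R a x = star a * x * a := rfl

theorem starConj_pow_apply (a x : A) (t : ℕ) :
    (starConj R a ^ t) x = star (a ^ t) * x * a ^ t := by
  induction t with
  | zero => simp
  | succ t ih =>
    rw [pow_succ', Module.End.mul_apply, ih, starConj_apply, pow_succ, star_mul]
    simp only [mul_assoc]

end StarConj

section LoewnerOrder

variable {A : Type*} [Ring A] [PartialOrder A] [StarRing A] [StarOrderedRing A] [Module ℝ A]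
  [StarModule ℝ A] [IsScalarTower ℝ A A] [SMulCommClass ℝ A A] {a s : A} {κ r : ℝ}

theorem star_pow_mul_mul_pow_le (hr : 0 ≤ r) (h : star a * s * a ≤ r • s) (t : ℕ) :
    star (a ^ t) * s * a ^ t ≤ r ^ t • s := by
  induction t with
  | zero => simp
  | succ t ih =>
    calc star (a ^ (t + 1)) * s * a ^ (t + 1) = star (a ^ t) * (star a * s * a) * a ^ t := by
          simp only [pow_succ', star_mul, mul_assoc]
      _ ≤ star (a ^ t) * (r • s) * a ^ t := star_left_conjugate_le_conjugate h _
      _ = r • (star (a ^ t) * s * a ^ t) := by rw [mul_smul_comm, smul_mul_assoc]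
      _ ≤ r • (r ^ t • s) := smul_le_smul_of_nonneg_left ih hr
      _ = r ^ (t + 1) • s := by rw [smul_smul, pow_succ']

theorem star_pow_mul_pow_le_smul_one (hr : 0 ≤ r) (hs₁ : 1 ≤ s) (hsκ : s ≤ κ • 1)
    (h : star a * s * a ≤ r • s) (t : ℕ) : star (a ^ t) * a ^ t ≤ (κ * r ^ t) • 1 :=
  calc star (a ^ t) * a ^ t = star (a ^ t) * 1 * a ^ t := by rw [mul_one]
    _ ≤ star (a ^ t) * s * a ^ t := star_left_conjugate_le_conjugate hs₁ _
    _ ≤ r ^ t • s := star_pow_mul_mul_pow_le hr h t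
    _ ≤ r ^ t • κ • (1 : A) := smul_le_smul_of_nonneg_left hsκ (pow_nonneg hr t)
    _ = (κ * r ^ t) • 1 := by rw [smul_smul, mul_comm]

end LoewnerOrder

namespace Matrix

open scoped RealInnerProductSpace in
theorem norm_toEuclideanCLM_sq_le {n : Type*} [Fintype n] [DecidableEq n]
    {B : Matrix n n ℝ} {c : ℝ} (hc : 0 ≤ c) (h : Bᴴ * B ≤ c • 1) :
    ‖toEuclideanCLM (𝕜 := ℝ) B‖ ^ 2 ≤ c := by
  rw [conjTranspose_eq_transpose_of_trivial] at h
  have hsq (x : EuclideanSpace ℝ n) : ‖toEuclideanCLM (𝕜 := ℝ) B x‖ ^ 2 ≤ c * ‖x‖ ^ 2 := by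
    have hx := (le_iff.mp h).dotProduct_mulVec_nonneg x.ofLp
    simp only [sub_mulVec, dotProduct_sub, smul_mulVec, one_mulVec, dotProduct_smul, star_trivial,
      smul_eq_mul, ← mulVec_mulVec, dotProduct_mulVec _ Bᵀ, vecMul_transpose] at hx
    rw [← real_inner_self_eq_norm_sq, ← real_inner_self_eq_norm_sq, inner_toEuclideanCLM,
      ofLp_toEuclideanCLM, EuclideanSpace.inner_eq_star_dotProduct, star_trivial]
    linarith
  have hop : ‖toEuclideanCLM (𝕜 := ℝ) B‖ ≤ √c :=
    ContinuousLinearMap.opNorm_le_bound _ (Real.sqrt_nonneg c) fun x ↦ by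
      rw [← pow_le_pow_iff_left₀ (norm_nonneg _) (by positivity) two_ne_zero, mul_pow,
        Real.sq_sqrt hc]
      exact hsq x
  exact (pow_le_pow_left₀ (norm_nonneg _) hop 2).trans_eq (Real.sq_sqrt hc)

section RCLike

variable {𝕜 : Type*} [RCLike 𝕜] {m n : Type*} [Fintype m] [Fintype n]

theorem frobenius_norm_sq_eq_sum_norm_col_sq (M : Matrix m n 𝕜) :
    ‖M‖ ^ 2 = ∑ j, ‖WithLp.toLp 2 (Mᵀ j)‖ ^ 2 := by
  simp only [frobenius_norm_def, EuclideanSpace.norm_sq_eq, Real.rpow_two, ← Real.sqrt_eq_rpow]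
  rw [Real.sq_sqrt (by positivity), Finset.sum_comm]
  rfl

variable [DecidableEq m]

theorem frobenius_norm_mul_le_opNorm_mul (B : Matrix m m 𝕜) (M : Matrix m n 𝕜) :
    ‖B * M‖ ≤ ‖toEuclideanCLM (𝕜 := 𝕜) B‖ * ‖M‖ := by
  refine le_of_sq_le_sq ?_ (by positivity)
  rw [mul_pow, frobenius_norm_sq_eq_sum_norm_col_sq, frobenius_norm_sq_eq_sum_norm_col_sq,
    Finset.mul_sum]
  gcongr with j
  have hcol : WithLp.toLp 2 ((B * M)ᵀ j) = toEuclideanCLM (𝕜 := 𝕜) B (WithLp.toLp 2 (Mᵀ j)) := by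
    rfl
  rw [hcol, ← mul_pow]
  gcongr
  exact (toEuclideanCLM (𝕜 := 𝕜) B).le_opNorm _

theorem norm_toEuclideanCLM_conjTranspose (B : Matrix m m 𝕜) :
    ‖toEuclideanCLM (𝕜 := 𝕜) Bᴴ‖ = ‖toEuclideanCLM (𝕜 := 𝕜) B‖ := by
  rw [← star_eq_conjTranspose, map_star]
  exact ContinuousLinearMap.adjoint.norm_map _

theorem frobenius_norm_mul_le_mul_opNorm (M : Matrix n m 𝕜) (B : Matrix m m 𝕜) :
    ‖M * B‖ ≤ ‖M‖ * ‖toEuclideanCLM (𝕜 := 𝕜) B‖ := by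
  rw [← frobenius_norm_conjTranspose, conjTranspose_mul, ← frobenius_norm_conjTranspose M,
    mul_comm, ← norm_toEuclideanCLM_conjTranspose B]
  exact frobenius_norm_mul_le_opNorm_mul _ _

theorem frobenius_norm_conjTranspose_mul_mul_le (B : Matrix m m 𝕜) (M : Matrix m m 𝕜) :
    ‖Bᴴ * M * B‖ ≤ ‖toEuclideanCLM (𝕜 := 𝕜) B‖ ^ 2 * ‖M‖ :=
  calc ‖Bᴴ * M * B‖ ≤ ‖Bᴴ * M‖ * ‖toEuclideanCLM (𝕜 := 𝕜) B‖ :=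
        frobenius_norm_mul_le_mul_opNorm _ _
    _ ≤ ‖toEuclideanCLM (𝕜 := 𝕜) B‖ * ‖M‖ * ‖toEuclideanCLM (𝕜 := 𝕜) B‖ := by
        gcongr
        simpa only [norm_toEuclideanCLM_conjTranspose] using frobenius_norm_mul_le_opNorm_mul Bᴴ M
    _ = ‖toEuclideanCLM (𝕜 := 𝕜) B‖ ^ 2 * ‖M‖ := by ring

end RCLike

theorem frobenius_norm_starConj_pow_apply_le {n : Type*} [Fintype n] [DecidableEq n]
    {S A : Matrix n n ℝ} {κ r : ℝ} (hκ : 0 ≤ κ) (hr : 0 ≤ r) (hS₁ : 1 ≤ S) (hSκ : S ≤ κ • 1)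
    (hA : star A * S * A ≤ r • S) (t : ℕ) (M : Matrix n n ℝ) :
    ‖(starConj ℝ A ^ t) M‖ ≤ κ * r ^ t * ‖M‖ := by
  rw [starConj_pow_apply, star_eq_conjTranspose]
  calc ‖(A ^ t)ᴴ * M * A ^ t‖ ≤ ‖toEuclideanCLM (𝕜 := ℝ) (A ^ t)‖ ^ 2 * ‖M‖ :=
        frobenius_norm_conjTranspose_mul_mul_le _ _
    _ ≤ κ * r ^ t * ‖M‖ := by
        gcongr
        exact norm_toEuclideanCLM_sq_le (by positivity)
          (star_pow_mul_pow_le_smul_one hr hS₁ hSκ hA t)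

end Matrix

theorem frobNorm_eq_norm {m n : ℕ} (M : Matrix (Fin m) (Fin n) ℝ) : frobNorm M = ‖M‖ := by
  rw [frobNorm, frobenius_norm_def, Real.sqrt_eq_rpow]
  simp [Real.norm_eq_abs, sq_abs]

theorem lyapunov_inverse_frobenius_bound_general
    {n : ℕ} (κ γ : ℝ) (hκ : 1 ≤ κ) (hγ0 : 0 < γ) (hγ1 : γ < 1)
    (S A : Matrix (Fin n) (Fin n) ℝ)
    (hlow : (S - 1).PosSemidef)
    (hhigh : (κ • (1 : Matrix (Fin n) (Fin n) ℝ) - S).PosSemidef)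
    (hcontract : ((1 - γ) ^ 2 • S - Aᵀ * S * A).PosSemidef) :
    ∀ (X P : Matrix (Fin n) (Fin n) ℝ), P - Aᵀ * P * A = X →
      frobNorm P ≤ κ / (γ * (2 - γ)) * frobNorm X := by
  intro X P hP
  have hA : star A * S * A ≤ (1 - γ) ^ 2 • S := by
    rwa [star_eq_conjTranspose, conjTranspose_eq_transpose_of_trivial]
  have hPX : P - starConj ℝ A P = X := by
    rwa [starConj_apply, star_eq_conjTranspose, conjTranspose_eq_transpose_of_trivial]
  rw [frobNorm_eq_norm, frobNorm_eq_norm, show γ * (2 - γ) = 1 - (1 - γ) ^ 2 by ring]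
  exact Module.End.norm_le_of_sub_apply_eq _ (by linarith) (sq_nonneg _) (by nlinarith)
    (frobenius_norm_starConj_pow_apply_le (by linarith) (sq_nonneg _) hlow hhigh hA) hPX

/-- **Bound on the inverse Lyapunov operator (Theorem 1).** Let `κ ≥ 1`, `γ ∈ (0,1)`,
let `S` be symmetric with `Iₙ ≼ S ≼ κIₙ`, and let `A` satisfy `AᵀSA ≼ (1−γ)²S` in the
Loewner order.  Then any solution `P` of the discrete Lyapunov equation `P − AᵀPA = X`
satisfies `‖P‖_F ≤ (κ / (γ(2−γ))) ‖X‖_F`. -/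
theorem lyapunov_inverse_frobenius_bound
    {n : ℕ} (κ γ : ℝ) (hκ : 1 ≤ κ) (hγ0 : 0 < γ) (hγ1 : γ < 1)
    (S A : Matrix (Fin n) (Fin n) ℝ) (hSsymm : S.IsSymm)
    (hlow : (S - 1).PosSemidef)
    (hhigh : (κ • (1 : Matrix (Fin n) (Fin n) ℝ) - S).PosSemidef)
    (hcontract : ((1 - γ) ^ 2 • S - Aᵀ * S * A).PosSemidef) :
    ∀ (X P : Matrix (Fin n) (Fin n) ℝ), P - Aᵀ * P * A = X →
      frobNorm P ≤ κ / (γ * (2 - γ)) * frobNorm X :=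
  lyapunov_inverse_frobenius_bound_general κ γ hκ hγ0 hγ1 S A hlow hhigh hcontract
end

section
/- Let P, A_cl ∈ ℝ^{n×n}, K ∈ ℝ^{m₁×n}, L ∈ ℝ^{m₂×n}, δA ∈ ℝ^{n×n}, δB₁ ∈ ℝ^{n×m₁}, δB₂ ∈ ℝ^{n×m₂}, and set δA_cl = δA − δB₁K − δB₂L. Then ‖δA_clᵀ P A_cl + A_clᵀ P δA_cl‖_F ≤ 2‖P‖₂·‖A_cl‖₂·√(1 + ‖K‖₂² + ‖L‖₂²)·√(‖δA‖_F² + ‖δB₁‖_F² + ‖δB₂‖_F²). -/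
/-!
Write `δA_cl = δA − δB₁K − δB₂L`. Both terms of the derivative are products with `δA_cl` as the
only factor measured in the Frobenius norm, and `‖XY‖_F ≤ ‖X‖₂‖Y‖_F`, `‖XY‖_F ≤ ‖X‖_F‖Y‖₂` give
`‖δA_clᵀPA_cl + A_clᵀPδA_cl‖_F ≤ 2‖P‖₂‖A_cl‖₂‖δA_cl‖_F`. The same two inequalities bound
`‖δA_cl‖_F` by `‖δA‖_F + ‖δB₁‖_F‖K‖₂ + ‖δB₂‖_F‖L‖₂`, and Cauchy–Schwarz in `ℝ³` turns this into
`√(1 + ‖K‖₂² + ‖L‖₂²) · ‖δθ‖₂`.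
-/

open Matrix
open scoped Matrix.Norms.L2Operator

lemma Matrix.l2_opNorm_transpose {m n : Type*} [Fintype m] [Fintype n] [DecidableEq m]
    [DecidableEq n] (A : Matrix m n ℝ) : ‖Aᵀ‖ = ‖A‖ := by
  rw [← conjTranspose_eq_transpose_of_trivial]
  exact l2_opNorm_conjTranspose A

lemma Real.add_mul_add_mul_le_sqrt_mul_sqrt (x₁ x₂ x₃ y₁ y₂ y₃ : ℝ) :
    x₁ * y₁ + x₂ * y₂ + x₃ * y₃ ≤
      √(x₁ ^ 2 + x₂ ^ 2 + x₃ ^ 2) * √(y₁ ^ 2 + y₂ ^ 2 + y₃ ^ 2) := by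
  simpa [Fin.sum_univ_three] using
    Real.sum_mul_le_sqrt_mul_sqrt Finset.univ ![x₁, x₂, x₃] ![y₁, y₂, y₃]

section Frobenius

variable {k m n : ℕ}

noncomputable def frobVec (M : Matrix (Fin m) (Fin n) ℝ) : EuclideanSpace ℝ (Fin m × Fin n) :=
  WithLp.toLp 2 fun ij => M ij.1 ij.2

lemma frobNorm_eq_norm_frobVec (M : Matrix (Fin m) (Fin n) ℝ) : frobNorm M = ‖frobVec M‖ := by
  simp [EuclideanSpace.norm_eq, frobNorm, Fintype.sum_prod_type, frobVec]

lemma frobVec_add (M N : Matrix (Fin m) (Fin n) ℝ) : frobVec (M + N) = frobVec M + frobVec N :=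
  rfl

lemma frobVec_sub (M N : Matrix (Fin m) (Fin n) ℝ) : frobVec (M - N) = frobVec M - frobVec N :=
  rfl

lemma frobNorm_nonneg (M : Matrix (Fin m) (Fin n) ℝ) : 0 ≤ frobNorm M :=
  Real.sqrt_nonneg _

lemma frobNorm_sub_le (M N : Matrix (Fin m) (Fin n) ℝ) :
    frobNorm (M - N) ≤ frobNorm M + frobNorm N := by
  simpa only [frobNorm_eq_norm_frobVec, frobVec_sub] using norm_sub_le (frobVec M) (frobVec N)

lemma frobNorm_add_le (M N : Matrix (Fin m) (Fin n) ℝ) :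
    frobNorm (M + N) ≤ frobNorm M + frobNorm N := by
  simpa only [frobNorm_eq_norm_frobVec, frobVec_add] using norm_add_le (frobVec M) (frobVec N)

lemma frobNorm_transpose (M : Matrix (Fin m) (Fin n) ℝ) : frobNorm Mᵀ = frobNorm M := by
  rw [frobNorm, frobNorm, Finset.sum_comm]
  rfl

lemma frobNorm_sq_eq_sum_norm_col_sq (M : Matrix (Fin m) (Fin n) ℝ) :
    frobNorm M ^ 2 = ∑ j, ‖(EuclideanSpace.equiv (Fin m) ℝ).symm (fun i => M i j)‖ ^ 2 := by
  rw [frobNorm, Real.sq_sqrt (by positivity), Finset.sum_comm]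
  simp [EuclideanSpace.norm_sq_eq]

lemma frobNorm_mul_le_opNorm_mul (A : Matrix (Fin k) (Fin m) ℝ) (B : Matrix (Fin m) (Fin n) ℝ) :
    frobNorm (A * B) ≤ ‖A‖ * frobNorm B := by
  have hcol : ∀ j, (EuclideanSpace.equiv (Fin k) ℝ).symm (fun i => (A * B) i j) =
      (EuclideanSpace.equiv (Fin k) ℝ).symm
        (A *ᵥ (EuclideanSpace.equiv (Fin m) ℝ).symm (fun i => B i j)) := by
    intro j
    ext i
    simp [mul_apply, mulVec, dotProduct]
  refine le_of_pow_le_pow_left₀ two_ne_zero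
    (mul_nonneg (norm_nonneg _) (frobNorm_nonneg _)) ?_
  rw [mul_pow, frobNorm_sq_eq_sum_norm_col_sq, frobNorm_sq_eq_sum_norm_col_sq, Finset.mul_sum]
  gcongr with j
  rw [hcol, ← mul_pow]
  exact pow_le_pow_left₀ (norm_nonneg _) (l2_opNorm_mulVec A _) 2

lemma frobNorm_mul_le_mul_opNorm (B : Matrix (Fin k) (Fin m) ℝ) (A : Matrix (Fin m) (Fin n) ℝ) :
    frobNorm (B * A) ≤ frobNorm B * ‖A‖ := by
  rw [← frobNorm_transpose, transpose_mul, ← l2_opNorm_transpose A, ← frobNorm_transpose B,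
    mul_comm]
  exact frobNorm_mul_le_opNorm_mul Aᵀ Bᵀ

end Frobenius

lemma frobNorm_transpose_mul_mul_add_le {n : ℕ} (X P A : Matrix (Fin n) (Fin n) ℝ) :
    frobNorm (Xᵀ * P * A + Aᵀ * P * X) ≤ 2 * ‖P‖ * ‖A‖ * frobNorm X := by
  have hleft : frobNorm (Xᵀ * P * A) ≤ ‖P‖ * ‖A‖ * frobNorm X :=
    calc frobNorm (Xᵀ * P * A) ≤ frobNorm Xᵀ * ‖P‖ * ‖A‖ := by
          grw [frobNorm_mul_le_mul_opNorm, frobNorm_mul_le_mul_opNorm]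
      _ = ‖P‖ * ‖A‖ * frobNorm X := by rw [frobNorm_transpose]; ring
  have hright : frobNorm (Aᵀ * P * X) ≤ ‖P‖ * ‖A‖ * frobNorm X :=
    calc frobNorm (Aᵀ * P * X) ≤ ‖Aᵀ‖ * ‖P‖ * frobNorm X := by
          grw [frobNorm_mul_le_opNorm_mul, l2_opNorm_mul]
          exact frobNorm_nonneg X
      _ = ‖P‖ * ‖A‖ * frobNorm X := by rw [l2_opNorm_transpose]; ring
  linarith [frobNorm_add_le (Xᵀ * P * A) (Aᵀ * P * X)]

lemma frobNorm_sub_mul_sub_mul_le {n m₁ m₂ : ℕ} (D : Matrix (Fin n) (Fin n) ℝ)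
    (E₁ : Matrix (Fin n) (Fin m₁) ℝ) (E₂ : Matrix (Fin n) (Fin m₂) ℝ)
    (K : Matrix (Fin m₁) (Fin n) ℝ) (L : Matrix (Fin m₂) (Fin n) ℝ) :
    frobNorm (D - E₁ * K - E₂ * L) ≤ frobNorm D + frobNorm E₁ * ‖K‖ + frobNorm E₂ * ‖L‖ := by
  grw [frobNorm_sub_le, frobNorm_sub_le, frobNorm_mul_le_mul_opNorm, frobNorm_mul_le_mul_opNorm]

/-- **Bound on the parameter derivative of the GARE residual (eq. (37)).** With
`δA_cl = δA − δB₁K − δB₂L`,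
`‖δA_clᵀ P A_cl + A_clᵀ P δA_cl‖_F ≤
  2‖P‖₂ ‖A_cl‖₂ √(1 + ‖K‖₂² + ‖L‖₂²) √(‖δA‖_F² + ‖δB₁‖_F² + ‖δB₂‖_F²)`,
where `‖·‖₂` is the spectral (L2 operator) norm and `‖·‖_F` the Frobenius norm. -/
theorem DthetaF_frobenius_bound
    {n m₁ m₂ : ℕ}
    (P Acl : Matrix (Fin n) (Fin n) ℝ)
    (K : Matrix (Fin m₁) (Fin n) ℝ) (L : Matrix (Fin m₂) (Fin n) ℝ)
    (δA : Matrix (Fin n) (Fin n) ℝ)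
    (δB₁ : Matrix (Fin n) (Fin m₁) ℝ) (δB₂ : Matrix (Fin n) (Fin m₂) ℝ)
    (δAcl : Matrix (Fin n) (Fin n) ℝ)
    (hδAcl : δAcl = δA - δB₁ * K - δB₂ * L) :
    frobNorm (δAclᵀ * P * Acl + Aclᵀ * P * δAcl) ≤
      2 * ‖P‖ * ‖Acl‖ * Real.sqrt (1 + ‖K‖ ^ 2 + ‖L‖ ^ 2) *
        Real.sqrt (frobNorm δA ^ 2 + frobNorm δB₁ ^ 2 + frobNorm δB₂ ^ 2) := by
  have hcs := Real.add_mul_add_mul_le_sqrt_mul_sqrt 1 ‖K‖ ‖L‖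
    (frobNorm δA) (frobNorm δB₁) (frobNorm δB₂)
  rw [one_pow, one_mul, mul_comm ‖K‖, mul_comm ‖L‖] at hcs
  calc frobNorm (δAclᵀ * P * Acl + Aclᵀ * P * δAcl)
      ≤ 2 * ‖P‖ * ‖Acl‖ * frobNorm δAcl := frobNorm_transpose_mul_mul_add_le δAcl P Acl
    _ ≤ 2 * ‖P‖ * ‖Acl‖ * (frobNorm δA + frobNorm δB₁ * ‖K‖ + frobNorm δB₂ * ‖L‖) := by
        grw [hδAcl, frobNorm_sub_mul_sub_mul_le]
    _ ≤ 2 * ‖P‖ * ‖Acl‖ * (Real.sqrt (1 + ‖K‖ ^ 2 + ‖L‖ ^ 2) *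
        Real.sqrt (frobNorm δA ^ 2 + frobNorm δB₁ ^ 2 + frobNorm δB₂ ^ 2)) := by grw [hcs]
    _ = _ := by ring
end
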